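/- Let w ∈ S_n and suppose a reduced decomposition of w contains a consecutive substring of the form (i+1, i, i+1, i-1, i, i+1) for some 2 ≤ i ≤ n-2. Then w contains a 4321-pattern: there exist positions a < b < c < d with w(a) > w(b) > w(c) > w(d). -/

import Mathlib

/-- The adjacent transposition `s_i` of `S_n` (1-based: swaps positions `i` and `i+1`). -/
def adjT (n : ℕ) (i : ℕ) : Equiv.Perm (Fin n) :=
  if h : 1 ≤ i ∧ i < n then Equiv.swap ⟨i - 1, by omega⟩ ⟨i, h.2⟩ else 1

/-- The number of inversions of a permutation of `Fin n`. -/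
def invCount (n : ℕ) (w : Equiv.Perm (Fin n)) : ℕ :=
  (Finset.univ.filter fun p : Fin n × Fin n => p.1 < p.2 ∧ w p.2 < w p.1).card

/-- `ρ` is a reduced decomposition of `w`: a word of length `inv(w)` in the letters
`1, …, n-1` whose product of adjacent transpositions is `w`. -/
def IsReducedDecomp (n : ℕ) (w : Equiv.Perm (Fin n)) (ρ : List ℕ) : Prop :=
  (∀ r ∈ ρ, 1 ≤ r ∧ r < n) ∧ (ρ.map (adjT n)).prod = w ∧ ρ.length = invCount n w

/-- A short braid move: swapping two adjacent letters differing by at least 2. -/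
def ShortBraidMove (ρ ρ' : List ℕ) : Prop :=
  ∃ l r : List ℕ, ∃ a b : ℕ, (a + 2 ≤ b ∨ b + 2 ≤ a) ∧
    ρ = l ++ [a, b] ++ r ∧ ρ' = l ++ [b, a] ++ r

/-- Two words are in the same commutation class iff related by short braid moves. -/
def CommEquiv : List ℕ → List ℕ → Prop := Relation.ReflTransGen ShortBraidMove

/-- A long braid move: `(i+1, i, i+1) ↔ (i, i+1, i)` on a consecutive substring. -/
def LongBraidMove (ρ ρ' : List ℕ) : Prop :=
  ∃ l r : List ℕ, ∃ i : ℕ,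
    (ρ = l ++ [i + 1, i, i + 1] ++ r ∧ ρ' = l ++ [i, i + 1, i] ++ r) ∨
    (ρ = l ++ [i, i + 1, i] ++ r ∧ ρ' = l ++ [i + 1, i, i + 1] ++ r)

/-- The number of commutation classes of reduced decompositions of `w`. -/
noncomputable def numCommClasses (n : ℕ) (w : Equiv.Perm (Fin n)) : ℕ :=
  Nat.card (Quot fun a b : {ρ : List ℕ // IsReducedDecomp n w ρ} => CommEquiv a.1 b.1)

/-- The arrangement (position ↦ value) after the first `k` steps of the word `ρ`. -/
def prefixPerm (n : ℕ) (ρ : List ℕ) (k : ℕ) : Equiv.Perm (Fin n) :=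
  ((ρ.take k).map (adjT n)).prod

/-- The word induced by `ρ` on a set `A` of values: record, in order, each step of `ρ`
swapping two values of `A`, labeled (1-based) by the relative position of the swapped
pair among the values of `A`. -/
def inducedWord (n : ℕ) (ρ : List ℕ) (A : Finset (Fin n)) : List ℕ :=
  (List.range ρ.length).filterMap fun k =>
    let u := prefixPerm n ρ k
    let i := ρ.getD k 0
    if h : 1 ≤ i ∧ i < n then
      if u ⟨i - 1, by omega⟩ ∈ A ∧ u ⟨i, h.2⟩ ∈ A then
        some ((A.filter fun x => (u.symm x : ℕ) < i - 1).card + 1)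
      else none
    else none

/-- The number of `(2,1,2)`-subnetworks of `ρ`. -/
def count212 (n : ℕ) (ρ : List ℕ) : ℕ :=
  (Finset.univ.filter fun A : Finset (Fin n) =>
    A.card = 3 ∧ inducedWord n ρ A = [2, 1, 2]).card

/-- The number of 321-patterns of `w`. -/
def N321 (n : ℕ) (w : Equiv.Perm (Fin n)) : ℕ :=
  (Finset.univ.filter fun t : Fin n × Fin n × Fin n =>
    t.1 < t.2.1 ∧ t.2.1 < t.2.2 ∧ w t.2.2 < w t.2.1 ∧ w t.2.1 < w t.1).card

/-!
Along a reduced word the inversion count of the partial products rises by exactly one at every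
letter. So each letter swaps two adjacent positions whose values are in increasing order, and a
pair of values, once inverted, stays inverted up to `w`. The substring `(i+1, i, i+1, i-1, i, i+1)`
is a reduced word of the reversal of the four positions it touches: the four values sitting there
before it are increasing, they sit there in reverse order after it, and their inversions survive
in `w` as a 4321-pattern.
-/

section Inversions

open Finset Equiv

variable {n : ℕ}

theorem swap_lt_swap_iff_of_succ_eq {p q : Fin n} (hpq : (p : ℕ) + 1 = q) (a b : Fin n) :
    swap p q a < swap p q b ↔ a < b ∧ ¬(a = p ∧ b = q) ∨ a = q ∧ b = p := by
  simp only [swap_apply_def, Fin.lt_def, Fin.ext_iff]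
  split_ifs <;> omega

theorem invCount_mul_swap_of_lt {π : Perm (Fin n)} {p q : Fin n} (hpq : (p : ℕ) + 1 = q)
    (h : π p < π q) : invCount n (π * swap p q) = invCount n π + 1 := by
  have hreindex : invCount n (π * swap p q) =
      #(univ.filter fun ab : Fin n × Fin n => swap p q ab.1 < swap p q ab.2 ∧ π ab.2 < π ab.1) := by
    rw [invCount, ← map_univ_equiv ((swap p q).prodCongr (swap p q)), filter_map, card_map]
    simp
  have hinsert :
      (univ.filter fun ab : Fin n × Fin n => swap p q ab.1 < swap p q ab.2 ∧ π ab.2 < π ab.1) =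
        insert (q, p) (univ.filter fun ab : Fin n × Fin n => ab.1 < ab.2 ∧ π ab.2 < π ab.1) := by
    ext ⟨a, b⟩
    simp only [mem_filter, mem_univ, true_and, mem_insert, Prod.mk.injEq,
      swap_lt_swap_iff_of_succ_eq hpq]
    constructor
    · rintro ⟨⟨hab, -⟩ | hqp, hinv⟩
      · exact Or.inr ⟨hab, hinv⟩
      · exact Or.inl hqp
    · rintro (⟨rfl, rfl⟩ | ⟨hab, hinv⟩)
      · exact ⟨Or.inr ⟨rfl, rfl⟩, h⟩
      · refine ⟨Or.inl ⟨hab, ?_⟩, hinv⟩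
        rintro ⟨rfl, rfl⟩
        exact lt_asymm h hinv
  rw [hreindex, hinsert, card_insert_of_notMem]
  · rfl
  · simp [(Fin.lt_def.mpr (by omega) : p < q).not_gt]

theorem invCount_one : invCount n 1 = 0 := by
  rw [invCount, card_eq_zero, filter_eq_empty_iff]
  exact fun _ _ h => lt_asymm h.1 h.2

theorem adjT_eq_swap {p q : Fin n} (hpq : (p : ℕ) + 1 = q) : adjT n q = swap p q := by
  rw [adjT, dif_pos ⟨by omega, q.isLt⟩]
  congr 1
  ext
  simp only
  omega

theorem invCount_mul_adjT_le (π : Perm (Fin n)) (j : ℕ) :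
    invCount n (π * adjT n j) ≤ invCount n π + 1 := by
  by_cases hj : 1 ≤ j ∧ j < n
  case neg => simp [adjT, hj]
  obtain ⟨q, rfl⟩ : ∃ q : Fin n, (q : ℕ) = j := ⟨⟨j, hj.2⟩, rfl⟩
  obtain ⟨p, hpq⟩ : ∃ p : Fin n, (p : ℕ) + 1 = q := ⟨⟨q - 1, by omega⟩, by simp; omega⟩
  rw [adjT_eq_swap hpq]
  have hne : π p ≠ π q := π.injective.ne (by rw [Ne, Fin.ext_iff]; omega)
  rcases hne.lt_or_gt with hasc | hdesc
  · rw [invCount_mul_swap_of_lt hpq hasc]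
  · have := invCount_mul_swap_of_lt (π := π * swap p q) hpq (by simpa using hdesc)
    rw [mul_swap_mul_self] at this
    omega

theorem invCount_mul_prod_le (π : Perm (Fin n)) (word : List ℕ) :
    invCount n (π * (word.map (adjT n)).prod) ≤ invCount n π + word.length := by
  induction word generalizing π with
  | nil => simp
  | cons j word ih =>
    rw [List.map_cons, List.prod_cons, ← mul_assoc, List.length_cons]
    have := invCount_mul_adjT_le π j
    have := ih (π * adjT n j)
    omega

theorem symm_mul_swap_lt_symm_mul_swap {π : Perm (Fin n)} {p q x y : Fin n}
    (hpq : (p : ℕ) + 1 = q) (hasc : π p < π q) (hyx : y < x) (h : π.symm x < π.symm y) :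
    (π * swap p q).symm x < (π * swap p q).symm y := by
  simp only [Perm.mul_def, symm_trans_apply, symm_swap]
  refine (swap_lt_swap_iff_of_succ_eq hpq _ _).mpr (Or.inl ⟨h, ?_⟩)
  rintro ⟨hx, hy⟩
  rw [symm_apply_eq] at hx hy
  exact lt_asymm hasc (hy ▸ hx ▸ hyx)

end Inversions

section ReversalWord

open Equiv

variable {α : Type*} [DecidableEq α] {a b c d : α}

-- `v` is the word `s₃ s₂ s₃ s₁ s₂ s₃` in `s₁ = (a b)`, `s₂ = (b c)`, `s₃ = (c d)`, which reverses
-- `a, b, c, d`; `t₂` and `t₅` are its prefixes followed by an `s₃`.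
theorem reversal_word_apply (hab : a ≠ b) (hac : a ≠ c) (had : a ≠ d) (hbc : b ≠ c)
    (hbd : b ≠ d) (hcd : c ≠ d) :
    let t₂ := swap c d * swap b c
    let t₅ := t₂ * swap c d * swap a b * swap b c
    let v := t₅ * swap c d
    (t₂ c = b ∧ t₂ d = c) ∧ (t₅ c = a ∧ t₅ d = b) ∧ v a = d ∧ v b = c ∧ v c = b ∧ v d = a := by
  have := hab.symm; have := hac.symm; have := had.symm
  have := hbc.symm; have := hbd.symm; have := hcd.symm
  simp [swap_apply_of_ne_of_ne, *]

end ReversalWord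

namespace IsReducedDecomp

open Equiv

variable {n : ℕ} {w : Perm (Fin n)} {ρ : List ℕ}

-- A descent at this letter would lower the inversion count by one, and the letters after it
-- could not raise it back to the length of `ρ`.
theorem prod_prefix_lt (hρ : IsReducedDecomp n w ρ) {l r : List ℕ} {p q : Fin n}
    (hpq : (p : ℕ) + 1 = q) (hsplit : ρ = l ++ (q : ℕ) :: r) :
    (l.map (adjT n)).prod p < (l.map (adjT n)).prod q := by
  set u := (l.map (adjT n)).prod
  have hne : u p ≠ u q := u.injective.ne (by rw [Ne, Fin.ext_iff]; omega)
  refine hne.lt_or_gt.resolve_right fun hdesc => ?_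
  have hu : invCount n u ≤ l.length := by
    simpa [invCount_one] using invCount_mul_prod_le 1 l
  have hdrop : invCount n u = invCount n (u * swap p q) + 1 := by
    simpa using invCount_mul_swap_of_lt (π := u * swap p q) hpq (by simpa using hdesc)
  have hw : w = u * swap p q * (r.map (adjT n)).prod := by
    rw [← hρ.2.1, hsplit]
    simp [u, adjT_eq_swap hpq, mul_assoc]
  have hbound := invCount_mul_prod_le (u * swap p q) r
  have hlen := hρ.2.2
  rw [← hw] at hbound
  rw [hsplit, List.length_append, List.length_cons] at hlen
  omega

theorem symm_lt_symm_of_prod_prefix (hρ : IsReducedDecomp n w ρ) {l r : List ℕ}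
    (hsplit : ρ = l ++ r) {x y : Fin n} (hyx : y < x)
    (h : (l.map (adjT n)).prod.symm x < (l.map (adjT n)).prod.symm y) :
    w.symm x < w.symm y := by
  induction r generalizing l with
  | nil => rwa [← hρ.2.1, hsplit, List.append_nil]
  | cons j r ih =>
    obtain ⟨hj, hjn⟩ := hρ.1 j (by simp [hsplit])
    obtain ⟨q, rfl⟩ : ∃ q : Fin n, (q : ℕ) = j := ⟨⟨j, hjn⟩, rfl⟩
    obtain ⟨p, hpq⟩ : ∃ p : Fin n, (p : ℕ) + 1 = q := ⟨⟨q - 1, by omega⟩, by simp; omega⟩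
    refine ih (l := l ++ [(q : ℕ)]) (by simp [hsplit]) ?_
    rw [List.map_append, List.prod_append, List.map_singleton, List.prod_singleton,
      adjT_eq_swap hpq]
    exact symm_mul_swap_lt_symm_mul_swap hpq (hρ.prod_prefix_lt hpq hsplit) hyx h

theorem prod_prefix_lt_of_reversal_infix (hρ : IsReducedDecomp n w ρ) {p₀ p₁ p₂ p₃ : Fin n}
    (h₀₁ : (p₀ : ℕ) + 1 = p₁) (h₁₂ : (p₁ : ℕ) + 1 = p₂) (h₂₃ : (p₂ : ℕ) + 1 = p₃) {l r : List ℕ}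
    (hsplit : ρ = l ++ [(p₃ : ℕ), p₂, p₃, p₁, p₂, p₃] ++ r) :
    let u := (l.map (adjT n)).prod
    u p₀ < u p₁ ∧ u p₁ < u p₂ ∧ u p₂ < u p₃ := by
  intro u
  obtain ⟨⟨ht₂c, ht₂d⟩, ⟨ht₅c, ht₅d⟩, -⟩ :=
    reversal_word_apply (a := p₀) (b := p₁) (c := p₂) (d := p₃) (Fin.ne_of_val_ne (by omega))
      (Fin.ne_of_val_ne (by omega)) (Fin.ne_of_val_ne (by omega)) (Fin.ne_of_val_ne (by omega))
      (Fin.ne_of_val_ne (by omega)) (Fin.ne_of_val_ne (by omega))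
  have s₁ := adjT_eq_swap h₀₁
  have s₂ := adjT_eq_swap h₁₂
  have s₃ := adjT_eq_swap h₂₃
  have hprod (word : List ℕ) :
      ((l ++ word).map (adjT n)).prod = u * (word.map (adjT n)).prod := by
    simp [u]
  refine ⟨?_, ?_, hρ.prod_prefix_lt h₂₃ (r := [(p₂ : ℕ), p₃, p₁, p₂, p₃] ++ r) (by simp [hsplit])⟩
  · have t₅ : ([(p₃ : ℕ), p₂, p₃, p₁, p₂].map (adjT n)).prod =
        swap p₂ p₃ * swap p₁ p₂ * swap p₂ p₃ * swap p₀ p₁ * swap p₁ p₂ := by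
      simp [s₁, s₂, s₃, mul_assoc]
    have := hρ.prod_prefix_lt h₂₃ (l := l ++ [(p₃ : ℕ), p₂, p₃, p₁, p₂]) (r := r)
      (by simp [hsplit])
    rwa [hprod, Perm.mul_apply, Perm.mul_apply, t₅, ht₅c, ht₅d] at this
  · have t₂ : ([(p₃ : ℕ), p₂].map (adjT n)).prod = swap p₂ p₃ * swap p₁ p₂ := by simp [s₂, s₃]
    have := hρ.prod_prefix_lt h₂₃ (l := l ++ [(p₃ : ℕ), p₂]) (r := [(p₁ : ℕ), p₂, p₃] ++ r)
      (by simp [hsplit])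
    rwa [hprod, Perm.mul_apply, Perm.mul_apply, t₂, ht₂c, ht₂d] at this

theorem symm_lt_symm_of_reversal_infix (hρ : IsReducedDecomp n w ρ) {p₀ p₁ p₂ p₃ : Fin n}
    (h₀₁ : (p₀ : ℕ) + 1 = p₁) (h₁₂ : (p₁ : ℕ) + 1 = p₂) (h₂₃ : (p₂ : ℕ) + 1 = p₃) {l r : List ℕ}
    (hsplit : ρ = l ++ [(p₃ : ℕ), p₂, p₃, p₁, p₂, p₃] ++ r) :
    let u := (l.map (adjT n)).prod
    w.symm (u p₃) < w.symm (u p₂) ∧ w.symm (u p₂) < w.symm (u p₁) ∧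
      w.symm (u p₁) < w.symm (u p₀) := by
  intro u
  obtain ⟨-, -, hva, hvb, hvc, hvd⟩ :=
    reversal_word_apply (a := p₀) (b := p₁) (c := p₂) (d := p₃) (Fin.ne_of_val_ne (by omega))
      (Fin.ne_of_val_ne (by omega)) (Fin.ne_of_val_ne (by omega)) (Fin.ne_of_val_ne (by omega))
      (Fin.ne_of_val_ne (by omega)) (Fin.ne_of_val_ne (by omega))
  obtain ⟨asc₀₁, asc₁₂, asc₂₃⟩ := hρ.prod_prefix_lt_of_reversal_infix h₀₁ h₁₂ h₂₃ hsplit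
  have hv {x y : Fin n} (h : (swap p₂ p₃ * swap p₁ p₂ * swap p₂ p₃ * swap p₀ p₁ * swap p₁ p₂ *
      swap p₂ p₃) y = x) :
      ((l ++ [(p₃ : ℕ), p₂, p₃, p₁, p₂, p₃]).map (adjT n)).prod.symm (u x) = y := by
    rw [symm_apply_eq, List.map_append, List.prod_append, Perm.mul_apply, ← h]
    simp [adjT_eq_swap h₀₁, adjT_eq_swap h₁₂, adjT_eq_swap h₂₃, mul_assoc, u]
  refine ⟨hρ.symm_lt_symm_of_prod_prefix hsplit asc₂₃ ?_,
    hρ.symm_lt_symm_of_prod_prefix hsplit asc₁₂ ?_, hρ.symm_lt_symm_of_prod_prefix hsplit asc₀₁ ?_⟩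
  · rw [hv hva, hv hvb]; exact Fin.lt_def.mpr (by omega)
  · rw [hv hvb, hv hvc]; exact Fin.lt_def.mpr (by omega)
  · rw [hv hvc, hv hvd]; exact Fin.lt_def.mpr (by omega)

end IsReducedDecomp

/-- If some reduced decomposition of `w` contains the consecutive
substring `(i+1, i, i+1, i-1, i, i+1)` with `2 ≤ i ≤ n-2`, then `w` contains a
4321-pattern. -/
theorem substring_implies_4321_pattern
    (n : ℕ) (w : Equiv.Perm (Fin n)) (ρ : List ℕ) (i : ℕ)
    (hi : 2 ≤ i ∧ i ≤ n - 2)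
    (hρ : IsReducedDecomp n w ρ)
    (hsub : ∃ l r : List ℕ,
      ρ = l ++ [i + 1, i, i + 1, i - 1, i, i + 1] ++ r) :
    ∃ a b c d : Fin n, a < b ∧ b < c ∧ c < d ∧
      w d < w c ∧ w c < w b ∧ w b < w a := by
  obtain ⟨hi₂, hin⟩ := hi
  obtain ⟨l, r, hsplit⟩ := hsub
  let p₀ : Fin n := ⟨i - 2, by omega⟩
  let p₁ : Fin n := ⟨i - 1, by omega⟩
  let p₂ : Fin n := ⟨i, by omega⟩
  let p₃ : Fin n := ⟨i + 1, by omega⟩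
  have h₀₁ : (p₀ : ℕ) + 1 = p₁ := by simp [p₀, p₁]; omega
  have h₁₂ : (p₁ : ℕ) + 1 = p₂ := by simp [p₁, p₂]; omega
  have h₂₃ : (p₂ : ℕ) + 1 = p₃ := rfl
  obtain ⟨hinc₀₁, hinc₁₂, hinc₂₃⟩ := hρ.prod_prefix_lt_of_reversal_infix h₀₁ h₁₂ h₂₃ hsplit
  obtain ⟨hpos₃₂, hpos₂₁, hpos₁₀⟩ := hρ.symm_lt_symm_of_reversal_infix h₀₁ h₁₂ h₂₃ hsplit
  exact ⟨_, _, _, _, hpos₃₂, hpos₂₁, hpos₁₀, by simpa using hinc₀₁, by simpa using hinc₁₂,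
    by simpa using hinc₂₃⟩
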